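/- arXiv:2005.11404 — 7 statements merged into one kernel-verified Lean document; each statement's English description precedes it below -/
import Mathlib

section
/- Consider the scalar simplicial SIS model ẏ = -γy + β₁(1-y)y + β₂(1-y)y², with γ, β₁, β₂ > 0. If β₂/γ > 1 and 2√(β₂/γ) - β₂/γ < β₁/γ < 1, then the quadratic equation -γ + β₁(1-y) + β₂(1-y)y = 0 has two distinct real roots ν₋ < ν₊ both lying in the interval (0,1]. -/
/-!
The quadratic has discriminant `D = (β₁ - β₂)² - 4β₂(γ - β₁) = (β₁ + β₂)² - 4γβ₂` and roots
`ν± = (β₂ - β₁ ± √D) / (2β₂)`. Multiplied by `γ`, the lower bound on `β₁/γ` says exactly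
`β₁ + β₂ > 2√(γβ₂)`, so `D > 0`. Since `β₁ < γ < β₂`, `D < (β₂ - β₁)²`, so both roots are positive;
since `γβ₂ > 0`, `D < (β₁ + β₂)²`, so both roots are at most `1`.
-/

open Real Set

section SimplicialSIS

variable {γ β₁ β₂ : ℝ}

/-- The paper's `ν±` is `sisRoot β₁ β₂ (±√D)`. -/
noncomputable def sisRoot (β₁ β₂ t : ℝ) : ℝ := (β₂ - β₁ + t) / (2 * β₂)

lemma half_add_eq_sisRoot (hβ₂ : β₂ ≠ 0) (t : ℝ) :
    1 / 2 * (1 - β₁ / β₂) + 1 / (2 * β₂) * t = sisRoot β₁ β₂ t := by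
  unfold sisRoot
  field_simp

lemma half_sub_eq_sisRoot (hβ₂ : β₂ ≠ 0) (t : ℝ) :
    1 / 2 * (1 - β₁ / β₂) - 1 / (2 * β₂) * t = sisRoot β₁ β₂ (-t) := by
  rw [← half_add_eq_sisRoot hβ₂, mul_neg, sub_eq_add_neg]

lemma sisRoot_isRoot (hβ₂ : β₂ ≠ 0) {t : ℝ} (ht : t ^ 2 = (β₁ - β₂) ^ 2 - 4 * β₂ * (γ - β₁)) :
    -γ + β₁ * (1 - sisRoot β₁ β₂ t) + β₂ * (1 - sisRoot β₁ β₂ t) * sisRoot β₁ β₂ t = 0 := by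
  unfold sisRoot
  field_simp
  linear_combination (-1) * ht

lemma sisRoot_strictMono (hβ₂ : 0 < β₂) : StrictMono (sisRoot β₁ β₂) := fun _ _ h ↦
  div_lt_div_of_pos_right (by linarith) (by positivity)

lemma sisRoot_mem_Ioc (hβ₂ : 0 < β₂) {t : ℝ} (hlo : β₁ - β₂ < t) (hhi : t ≤ β₁ + β₂) :
    sisRoot β₁ β₂ t ∈ Ioc 0 1 :=
  ⟨div_pos (by linarith) (by positivity), (div_le_one (by positivity)).2 (by linarith)⟩

lemma two_mul_sqrt_mul_lt_add_of_bistable (hγ : 0 < γ)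
    (h : 2 * √(β₂ / γ) - β₂ / γ < β₁ / γ) : 2 * √(γ * β₂) < β₁ + β₂ := by
  have hγsqrt : γ * √(β₂ / γ) = √(γ * β₂) := by
    rw [← sqrt_sq hγ.le, ← sqrt_mul (sq_nonneg γ), sqrt_sq hγ.le]
    congr 1
    field_simp
  have := (lt_div_iff₀ hγ).1 h
  rw [sub_mul, div_mul_cancel₀ _ hγ.ne'] at this
  linarith

lemma bistable_discr_pos (hγβ₂ : 0 ≤ γ * β₂) (h : 2 * √(γ * β₂) < β₁ + β₂) :
    0 < (β₁ - β₂) ^ 2 - 4 * β₂ * (γ - β₁) := by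
  have hsq := sq_sqrt hγβ₂
  nlinarith [sqrt_nonneg (γ * β₂)]

lemma sqrt_bistable_discr_lt_sub (hβ₂ : 0 < β₂) (hβ₁γ : β₁ < γ) (hβ₁β₂ : β₁ < β₂) :
    √((β₁ - β₂) ^ 2 - 4 * β₂ * (γ - β₁)) < β₂ - β₁ :=
  (sqrt_lt' (by linarith)).2 (by nlinarith)

lemma sqrt_bistable_discr_lt_add (hγ : 0 < γ) (hβ₂ : 0 < β₂) (hβ : 0 < β₁ + β₂) :
    √((β₁ - β₂) ^ 2 - 4 * β₂ * (γ - β₁)) < β₁ + β₂ :=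
  (sqrt_lt' hβ).2 (by nlinarith [mul_pos hγ hβ₂])

end SimplicialSIS

theorem scalar_bistable_two_roots_general (γ β₁ β₂ : ℝ) (hγ : 0 < γ)
    (h1 : 1 < β₂ / γ) (h2 : 2 * Real.sqrt (β₂ / γ) - β₂ / γ < β₁ / γ) (h3 : β₁ / γ < 1) :
    let νm := (1 / 2) * (1 - β₁ / β₂) -
      (1 / (2 * β₂)) * Real.sqrt ((β₁ - β₂) ^ 2 - 4 * β₂ * (γ - β₁))
    let νp := (1 / 2) * (1 - β₁ / β₂) +
      (1 / (2 * β₂)) * Real.sqrt ((β₁ - β₂) ^ 2 - 4 * β₂ * (γ - β₁))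
    νm < νp ∧ νm ∈ Set.Ioc (0 : ℝ) 1 ∧ νp ∈ Set.Ioc (0 : ℝ) 1 ∧
      (-γ + β₁ * (1 - νm) + β₂ * (1 - νm) * νm = 0) ∧
      (-γ + β₁ * (1 - νp) + β₂ * (1 - νp) * νp = 0) := by
  dsimp only
  have hγβ₂ : γ < β₂ := by simpa using (lt_div_iff₀ hγ).1 h1
  have hβ₁γ : β₁ < γ := by simpa using (div_lt_iff₀ hγ).1 h3
  have hβ₂ : 0 < β₂ := hγ.trans hγβ₂
  have hsum := two_mul_sqrt_mul_lt_add_of_bistable hγ h2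
  have hD := bistable_discr_pos (mul_pos hγ hβ₂).le hsum
  have hs := sqrt_pos.2 hD
  have hlt_sub := sqrt_bistable_discr_lt_sub hβ₂ hβ₁γ (hβ₁γ.trans hγβ₂)
  have hβ₁β₂ : 0 < β₁ + β₂ := by linarith [sqrt_nonneg (γ * β₂)]
  have hlt_add := sqrt_bistable_discr_lt_add hγ hβ₂ hβ₁β₂
  rw [half_sub_eq_sisRoot hβ₂.ne', half_add_eq_sisRoot hβ₂.ne']
  refine ⟨sisRoot_strictMono hβ₂ (by linarith),
    sisRoot_mem_Ioc hβ₂ (by linarith) (by linarith),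
    sisRoot_mem_Ioc hβ₂ (by linarith) hlt_add.le,
    sisRoot_isRoot hβ₂.ne' (by rw [neg_sq, sq_sqrt hD.le]),
    sisRoot_isRoot hβ₂.ne' (sq_sqrt hD.le)⟩

/-- In the bistable domain of the scalar simplicial SIS model, the quadratic
`-γ + β₁(1-y) + β₂(1-y)y = 0` has two distinct roots `ν₋ < ν₊`, both in `(0,1]`. -/
theorem scalar_bistable_two_roots (γ β₁ β₂ : ℝ) (hγ : 0 < γ) (hβ₁ : 0 < β₁) (hβ₂ : 0 < β₂)
    (h1 : 1 < β₂ / γ) (h2 : 2 * Real.sqrt (β₂ / γ) - β₂ / γ < β₁ / γ) (h3 : β₁ / γ < 1) :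
    let νm := (1 / 2) * (1 - β₁ / β₂) -
      (1 / (2 * β₂)) * Real.sqrt ((β₁ - β₂) ^ 2 - 4 * β₂ * (γ - β₁))
    let νp := (1 / 2) * (1 - β₁ / β₂) +
      (1 / (2 * β₂)) * Real.sqrt ((β₁ - β₂) ^ 2 - 4 * β₂ * (γ - β₁))
    νm < νp ∧ νm ∈ Set.Ioc (0 : ℝ) 1 ∧ νp ∈ Set.Ioc (0 : ℝ) 1 ∧
      (-γ + β₁ * (1 - νm) + β₂ * (1 - νm) * νm = 0) ∧
      (-γ + β₁ * (1 - νp) + β₂ * (1 - νp) * νp = 0) :=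
  scalar_bistable_two_roots_general γ β₁ β₂ hγ h1 h2 h3
end

section
/- For the scalar simplicial SIS model f(y) = -γy + β₁(1-y)y + β₂(1-y)y² with γ, β₁, β₂ > 0: if β₁/γ > 1 then f(y) = 0 has a unique root ν₊ in (0,1], and f(y) > 0 for y ∈ (0, ν₊) while f(y) < 0 for y ∈ (ν₊, 1]. -/
/-! Dividing out the disease-free root `y = 0` leaves the concave quadratic
`β₂(1-y)y + β₁(1-y) - γ`, whose value `β₁ - γ` at `0` is positive. Its roots `ν₋ < 0 < ν₊` are
given by the quadratic formula, so `f y = β₂ y (ν₊ - y)(y - ν₋)`, and the signs on `(0,1]` can be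
read off the factors. Finally `ν₊ ≤ 1` because the quadratic equals `-γ < 0` at `y = 1`. -/

namespace ScalarSIS

variable {γ β₁ β₂ : ℝ}

noncomputable def quadDiscrim (γ β₁ β₂ : ℝ) : ℝ := (β₁ - β₂) ^ 2 - 4 * β₂ * (γ - β₁)

noncomputable def rootPlus (γ β₁ β₂ : ℝ) : ℝ :=
  (1 / 2) * (1 - β₁ / β₂) + (1 / (2 * β₂)) * √(quadDiscrim γ β₁ β₂)

noncomputable def rootMinus (γ β₁ β₂ : ℝ) : ℝ :=
  (1 / 2) * (1 - β₁ / β₂) - (1 / (2 * β₂)) * √(quadDiscrim γ β₁ β₂)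

lemma rootPlus_eq (hβ₂ : β₂ ≠ 0) :
    rootPlus γ β₁ β₂ = (β₂ - β₁ + √(quadDiscrim γ β₁ β₂)) / (2 * β₂) := by
  unfold rootPlus
  field_simp

lemma rootMinus_eq (hβ₂ : β₂ ≠ 0) :
    rootMinus γ β₁ β₂ = (β₂ - β₁ - √(quadDiscrim γ β₁ β₂)) / (2 * β₂) := by
  unfold rootMinus
  field_simp

lemma sq_sub_lt_quadDiscrim (hβ₂ : 0 < β₂) (hγβ₁ : γ < β₁) :
    (β₁ - β₂) ^ 2 < quadDiscrim γ β₁ β₂ := by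
  unfold quadDiscrim
  nlinarith

lemma abs_sub_lt_sqrt_quadDiscrim (hβ₂ : 0 < β₂) (hγβ₁ : γ < β₁) :
    |β₁ - β₂| < √(quadDiscrim γ β₁ β₂) := by
  rw [← Real.sqrt_sq_eq_abs]
  exact Real.sqrt_lt_sqrt (sq_nonneg _) (sq_sub_lt_quadDiscrim hβ₂ hγβ₁)

lemma sqrt_quadDiscrim_le_add (hγ : 0 ≤ γ) (hβ₂ : 0 ≤ β₂) (hβ₁₂ : 0 ≤ β₁ + β₂) :
    √(quadDiscrim γ β₁ β₂) ≤ β₁ + β₂ := by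
  rw [Real.sqrt_le_iff]
  refine ⟨hβ₁₂, ?_⟩
  unfold quadDiscrim
  nlinarith

lemma rootMinus_neg (hβ₂ : 0 < β₂) (hγβ₁ : γ < β₁) : rootMinus γ β₁ β₂ < 0 := by
  have := (abs_lt.1 (abs_sub_lt_sqrt_quadDiscrim hβ₂ hγβ₁)).1
  rw [rootMinus_eq hβ₂.ne']
  exact div_neg_of_neg_of_pos (by linarith) (by positivity)

lemma rootPlus_pos (hβ₂ : 0 < β₂) (hγβ₁ : γ < β₁) : 0 < rootPlus γ β₁ β₂ := by
  have := (abs_lt.1 (abs_sub_lt_sqrt_quadDiscrim hβ₂ hγβ₁)).2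
  rw [rootPlus_eq hβ₂.ne']
  exact div_pos (by linarith) (by positivity)

lemma rootPlus_le_one (hγ : 0 ≤ γ) (hβ₂ : 0 < β₂) (hβ₁₂ : 0 ≤ β₁ + β₂) :
    rootPlus γ β₁ β₂ ≤ 1 := by
  have := sqrt_quadDiscrim_le_add hγ hβ₂.le hβ₁₂
  rw [rootPlus_eq hβ₂.ne', div_le_one (by positivity)]
  linarith

lemma factorization (hβ₂ : β₂ ≠ 0) (hD : 0 ≤ quadDiscrim γ β₁ β₂) (y : ℝ) :
    -γ * y + β₁ * (1 - y) * y + β₂ * (1 - y) * y ^ 2 =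
      β₂ * y * (rootPlus γ β₁ β₂ - y) * (y - rootMinus γ β₁ β₂) := by
  have hs := Real.sq_sqrt hD
  rw [rootPlus_eq hβ₂, rootMinus_eq hβ₂]
  set s := √(quadDiscrim γ β₁ β₂)
  unfold quadDiscrim at hs
  field_simp
  linear_combination (-y) * hs

end ScalarSIS

/-- Endemic domain of the scalar simplicial SIS model: if `β₁/γ > 1`, then
`f(y) = -γy + β₁(1-y)y + β₂(1-y)y²` has a unique root `ν₊` in `(0,1]`,
`f > 0` on `(0,ν₊)` and `f < 0` on `(ν₊,1]`. -/
theorem scalar_endemic_unique_root (γ β₁ β₂ : ℝ) (hγ : 0 < γ) (hβ₂ : 0 < β₂)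
    (h : 1 < β₁ / γ) :
    let f : ℝ → ℝ := fun y => -γ * y + β₁ * (1 - y) * y + β₂ * (1 - y) * y ^ 2
    let νp := (1 / 2) * (1 - β₁ / β₂) +
      (1 / (2 * β₂)) * Real.sqrt ((β₁ - β₂) ^ 2 - 4 * β₂ * (γ - β₁))
    f νp = 0 ∧ νp ∈ Set.Ioc (0 : ℝ) 1 ∧
      (∀ y ∈ Set.Ioc (0 : ℝ) 1, f y = 0 → y = νp) ∧
      (∀ y ∈ Set.Ioo (0 : ℝ) νp, 0 < f y) ∧
      (∀ y ∈ Set.Ioc νp 1, f y < 0) := by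
  intro f νp
  have hγβ₁ : γ < β₁ := (one_lt_div hγ).mp h
  have hνp : 0 < νp := ScalarSIS.rootPlus_pos hβ₂ hγβ₁
  set νm := ScalarSIS.rootMinus γ β₁ β₂
  have hνm : νm < 0 := ScalarSIS.rootMinus_neg hβ₂ hγβ₁
  have hf (y : ℝ) : f y = β₂ * y * (νp - y) * (y - νm) :=
    ScalarSIS.factorization hβ₂.ne'
      ((sq_nonneg _).trans_lt (ScalarSIS.sq_sub_lt_quadDiscrim hβ₂ hγβ₁)).le y
  refine ⟨by simp [hf], ⟨hνp, ScalarSIS.rootPlus_le_one hγ.le hβ₂ (by linarith)⟩, ?_, ?_, ?_⟩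
  · rintro y ⟨hy, -⟩ hfy
    by_contra hne
    have hyνm : 0 < y - νm := by linarith
    exact mul_ne_zero (mul_ne_zero (mul_ne_zero hβ₂.ne' hy.ne') (sub_ne_zero.2 (Ne.symm hne)))
      hyνm.ne' ((hf y).symm.trans hfy)
  · rintro y ⟨hy, hyν⟩
    rw [hf]
    exact mul_pos (mul_pos (mul_pos hβ₂ hy) (sub_pos.2 hyν)) (by linarith)
  · rintro y ⟨hνy, -⟩
    have hy : 0 < y := hνp.trans hνy
    rw [hf]
    exact mul_neg_of_neg_of_pos (mul_neg_of_pos_of_neg (mul_pos hβ₂ hy) (sub_neg.2 hνy))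
      (by linarith)
end

section
/- For the scalar simplicial SIS model with γ, β₁, β₂ > 0, if β₂/γ ≤ 1 and β₁/γ ≤ 1 and (β₁, β₂) ≠ (γ, γ), then f(y) = -γy + β₁(1-y)y + β₂(1-y)y² < 0 for all y ∈ (0,1]; hence 0 is the unique equilibrium in [0,1]. -/
/-- Disease-free domain of the scalar simplicial SIS model (first case): if
`β₁ ≤ γ`, `β₂ ≤ γ` and not both equal to `γ`, then `f < 0` on `(0,1]`; hence `0` is the
unique equilibrium in `[0,1]`. -/
theorem scalar_disease_free_case1 (γ β₁ β₂ : ℝ) (hγ : 0 < γ) (hβ₁ : 0 < β₁) (hβ₂ : 0 < β₂)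
    (h1 : β₂ / γ ≤ 1) (h2 : β₁ / γ ≤ 1) (h3 : (β₁, β₂) ≠ (γ, γ)) :
    (∀ y ∈ Set.Ioc (0 : ℝ) 1, -γ * y + β₁ * (1 - y) * y + β₂ * (1 - y) * y ^ 2 < 0) ∧
    (∀ y ∈ Set.Icc (0 : ℝ) 1,
      -γ * y + β₁ * (1 - y) * y + β₂ * (1 - y) * y ^ 2 = 0 → y = 0) := by
  have hb2 : β₂ ≤ γ := (div_le_one hγ).mp h1
  have hb1 : β₁ ≤ γ := (div_le_one hγ).mp h2
  have key : ∀ y ∈ Set.Ioc (0 : ℝ) 1,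
      -γ * y + β₁ * (1 - y) * y + β₂ * (1 - y) * y ^ 2 < 0 := by
    intro y ⟨hy0, hy1⟩
    nlinarith [mul_pos (mul_pos hγ hy0) (mul_pos hy0 hy0),
      mul_nonneg (mul_nonneg (sub_nonneg.mpr hb1) (sub_nonneg.mpr hy1)) hy0.le,
      mul_nonneg (mul_nonneg (mul_nonneg (sub_nonneg.mpr hb2) (sub_nonneg.mpr hy1)) hy0.le) hy0.le]
  refine ⟨key, fun y ⟨h0, h1'⟩ heq => ?_⟩
  by_contra hne
  have hy0 : 0 < y := lt_of_le_of_ne h0 (Ne.symm hne)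
  exact absurd heq (ne_of_lt (key y ⟨hy0, h1'⟩))
end

section
/- For the scalar simplicial SIS model with γ, β₁, β₂ > 0 satisfying β₂ > γ and β₁/γ < 2√(β₂/γ) - β₂/γ, the function f(y) = -γy + β₁(1-y)y + β₂(1-y)y² is strictly negative on (0,1]; i.e., 0 is the unique equilibrium in [0,1]. -/
/-- Disease-free domain of the scalar simplicial SIS model (second case): if `β₂ > γ` and
`β₁/γ < 2√(β₂/γ) - β₂/γ`, then `f < 0` on `(0,1]`; hence `0` is the unique equilibrium
in `[0,1]`. -/
theorem scalar_disease_free_case2 (γ β₁ β₂ : ℝ) (hγ : 0 < γ) (hβ₁ : 0 < β₁)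
    (h1 : γ < β₂) (h2 : β₁ / γ < 2 * Real.sqrt (β₂ / γ) - β₂ / γ) :
    (∀ y ∈ Set.Ioc (0 : ℝ) 1, -γ * y + β₁ * (1 - y) * y + β₂ * (1 - y) * y ^ 2 < 0) ∧
    (∀ y ∈ Set.Icc (0 : ℝ) 1,
      -γ * y + β₁ * (1 - y) * y + β₂ * (1 - y) * y ^ 2 = 0 → y = 0) := by
  have hβ₂ : 0 < β₂ := hγ.trans h1
  set s := Real.sqrt (β₂ / γ) with hs
  have hs0 : 0 ≤ s := Real.sqrt_nonneg _
  have hs2 : s ^ 2 = β₂ / γ := Real.sq_sqrt (by positivity)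
  have hkey : β₁ + β₂ < 2 * γ * s := by
    have := (div_lt_iff₀ hγ).mp (by linarith [h2] : β₁ / γ < 2 * s - β₂ / γ)
    have hb : β₂ / γ * γ = β₂ := div_mul_cancel₀ _ hγ.ne'
    nlinarith
  have hsq : (β₁ + β₂) ^ 2 < 4 * γ * β₂ := by
    have h0 : 0 < β₁ + β₂ := by linarith
    have : (β₁ + β₂) ^ 2 < (2 * γ * s) ^ 2 := by
      apply sq_lt_sq' <;> nlinarith
    have hγs : (2 * γ * s) ^ 2 = 4 * γ * β₂ := by
      have he : (2 * γ * s) ^ 2 = 4 * γ ^ 2 * s ^ 2 := by ring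
      rw [he, hs2]
      field_simp
    linarith [hγs ▸ this]
  have hneg : ∀ y : ℝ, -γ + β₁ * (1 - y) + β₂ * (1 - y) * y < 0 := by
    intro y
    nlinarith [sq_nonneg (2 * β₂ * y - (β₂ - β₁)), hβ₂]
  constructor
  · intro y hy
    have h := hneg y
    have hy0 : 0 < y := hy.1
    nlinarith
  · intro y hy heq
    by_contra h0
    have hy0 : 0 < y := lt_of_le_of_ne hy.1 (Ne.symm h0)
    have h := hneg y
    nlinarith
end

section
/- Under the conditions x* ∈ [0,1]^n an equilibrium of the simplicial SIS model with A nonnegative and irreducible: if x*_i = 0 for some i, then x* = 0. That is, the only equilibrium with a zero coordinate is the origin. -/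
open Finset

/-- Irreducibility of a nonnegative matrix: for all `i j` there is `k ≤ n-1` with
`(A^k) i j > 0`. -/
def MatrixIrreducible {n : ℕ} (A : Matrix (Fin n) (Fin n) ℝ) : Prop :=
  ∀ i j : Fin n, ∃ k ≤ n - 1, 0 < (A ^ k) i j


lemma pow_entry_nonneg {n : ℕ} (A : Matrix (Fin n) (Fin n) ℝ) (hA : ∀ i j, 0 ≤ A i j)
    (m : ℕ) : ∀ i j, 0 ≤ (A ^ m) i j := by
  induction m with
  | zero =>
    intro i j
    simp only [pow_zero, Matrix.one_apply]
    split <;> norm_num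
  | succ k ih =>
    intro i j
    rw [pow_succ, Matrix.mul_apply]
    exact Finset.sum_nonneg fun l _ => mul_nonneg (ih i l) (hA l j)

/-- If an equilibrium `x* ∈ [0,1]^n` of the simplicial SIS model (with `A` nonnegative
irreducible) has some zero coordinate, then `x* = 0`. -/
theorem equilibrium_zero_coordinate_eq_zero {n : ℕ} (γ : Fin n → ℝ) (hγ : ∀ i, 0 < γ i)
    (β₁ β₂ : ℝ) (hβ₁ : 0 < β₁) (hβ₂ : 0 < β₂)
    (A : Matrix (Fin n) (Fin n) ℝ) (hA : ∀ i j, 0 ≤ A i j) (hirr : MatrixIrreducible A)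
    (B : Fin n → Matrix (Fin n) (Fin n) ℝ) (hB : ∀ i j k, 0 ≤ B i j k)
    (x : Fin n → ℝ) (hx : ∀ i, 0 ≤ x i ∧ x i ≤ 1)
    (heq : ∀ i, -γ i * x i + β₁ * (1 - x i) * (∑ j, A i j * x j)
        + β₂ * (1 - x i) * (∑ j, ∑ k, x j * B i j k * x k) = 0)
    (i₀ : Fin n) (h0 : x i₀ = 0) : x = 0 := by
  -- key step: zero coordinates propagate along positive entries of A
  have key : ∀ i, x i = 0 → ∀ j, 0 < A i j → x j = 0 := by
    intro i hi j hAij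
    have h := heq i
    rw [hi] at h
    simp only [mul_zero, neg_mul, sub_zero, mul_one, neg_zero, zero_add] at h
    have hS1 : 0 ≤ ∑ j, A i j * x j :=
      Finset.sum_nonneg fun j _ => mul_nonneg (hA i j) (hx j).1
    have hS2 : 0 ≤ ∑ j, ∑ k, x j * B i j k * x k :=
      Finset.sum_nonneg fun j _ => Finset.sum_nonneg fun k _ =>
        mul_nonneg (mul_nonneg (hx j).1 (hB i j k)) (hx k).1
    have h1 : β₁ * ∑ j, A i j * x j = 0 := by nlinarith
    have hSsum : ∑ j, A i j * x j = 0 := by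
      rcases mul_eq_zero.mp h1 with h' | h'
      · exact absurd h' (ne_of_gt hβ₁)
      · exact h'
    have hterm : A i j * x j = 0 := by
      have := (Finset.sum_eq_zero_iff_of_nonneg
        (fun j _ => mul_nonneg (hA i j) (hx j).1)).mp hSsum j (Finset.mem_univ j)
      exact this
    rcases mul_eq_zero.mp hterm with h' | h'
    · exact absurd h' (ne_of_gt hAij)
    · exact h'
  -- propagate along powers
  have pow_key : ∀ k : ℕ, ∀ i j : Fin n, x i = 0 → 0 < (A ^ k) i j → x j = 0 := by
    intro k
    induction k with
    | zero =>
      intro i j hi hpos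
      simp only [pow_zero, Matrix.one_apply] at hpos
      by_cases hij : i = j
      · exact hij ▸ hi
      · simp [hij] at hpos
    | succ m ih =>
      intro i j hi hpos
      rw [pow_succ, Matrix.mul_apply] at hpos
      obtain ⟨l, -, hl⟩ := Finset.exists_lt_of_sum_lt (by
        simpa using hpos : ∑ l, (0:ℝ) < ∑ l, (A ^ m) i l * A l j)
      have hAm : 0 < (A ^ m) i l := by
        rcases lt_or_ge 0 ((A ^ m) i l) with h' | h'
        · exact h'
        · exfalso
          nlinarith [hA l j, pow_entry_nonneg A hA m i l]
      have hAlj : 0 < A l j := by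
        nlinarith [pow_entry_nonneg A hA m i l]
      exact key l (ih i l hi hAm) j hAlj
  funext j
  obtain ⟨k, -, hk⟩ := hirr i₀ j
  simpa using pow_key k i₀ j h0 hk
end

section
/- If ρ(β₁Γ⁻¹A + β₂Γ⁻¹(𝟙ᵀB₁,…,𝟙ᵀBₙ)ᵀ) < 1, then the origin is the unique fixed point in [0,1]^n of the map H(x) = H₊(β₁Γ⁻¹Ax + β₂Γ⁻¹(xᵀB₁x,…,xᵀBₙx)ᵀ); equivalently, 0 is the unique equilibrium of the simplicial SIS model in [0,1]^n. -/
/-!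
A fixed point `x ∈ [0,1]ⁿ` of `H` is a subsolution of the linearisation: `z / (1 + z) ≤ z` for
`z ≥ 0`, and `x ≤ 1` bounds the quadratic term `xᵀBᵢx` by the linear term `𝟙ᵀBᵢx`. Hence
`x ≤ Mx` for the nonnegative matrix `M = β₁Γ⁻¹A + β₂Γ⁻¹(𝟙ᵀBᵢ)ᵢ`, and iterating gives
`x ≤ Mᵐx`. By Gelfand's formula `ρ(M) < 1` forces `Mᵐ → 0`, so `x ≤ 0`.
-/

open Finset Matrix Filter Topology NNReal

theorem tendsto_pow_nhds_zero_of_spectralRadius_lt_one {A : Type*} [NormedRing A]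
    [NormedAlgebra ℂ A] [CompleteSpace A] {a : A} (h : spectralRadius ℂ a < 1) :
    Tendsto (a ^ ·) atTop (𝓝 0) := by
  obtain ⟨c, hρc, hc1⟩ := exists_between h
  lift c to ℝ≥0 using (hc1.trans_le le_top).ne
  have hbound : ∀ᶠ m : ℕ in atTop, ‖a ^ m‖₊ ≤ c ^ m := by
    filter_upwards [(spectrum.pow_nnnorm_pow_one_div_tendsto_nhds_spectralRadius a)
      |>.eventually_lt_const hρc, eventually_gt_atTop 0] with m hm hm0
    rw [one_div, ENNReal.rpow_inv_lt_iff (Nat.cast_pos.2 hm0), ENNReal.rpow_natCast] at hm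
    exact_mod_cast hm.le
  refine squeeze_zero_norm' (hbound.mono fun m hm => ?_)
    (tendsto_pow_atTop_nhds_zero_of_lt_one c.2 (by exact_mod_cast hc1))
  exact_mod_cast hm

namespace Matrix

variable {ι : Type*} [Fintype ι]

-- Any Banach-algebra norm will do: `spectralRadius` is algebraic and the limit lives in the
-- product topology.
attribute [local instance] Matrix.linftyOpNormedRing Matrix.linftyOpNormedAlgebra in
theorem tendsto_pow_nhds_zero_of_spectralRadius_map_ofReal_lt_one [DecidableEq ι]
    {M : Matrix ι ι ℝ} (h : spectralRadius ℂ (M.map Complex.ofReal) < 1) :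
    Tendsto (M ^ ·) atTop (𝓝 0) := by
  have hre := ((continuous_id.matrix_map Complex.continuous_re).tendsto 0).comp
    (_root_.tendsto_pow_nhds_zero_of_spectralRadius_lt_one h)
  have hmap (m : ℕ) : M.map Complex.ofReal ^ m = (M ^ m).map Complex.ofRealHom :=
    (M.map_pow Complex.ofRealHom m).symm
  simpa [Function.comp_def, hmap, map_map] using hre

section Nonneg

variable {R : Type*} [Semiring R] [PartialOrder R] [IsOrderedRing R]

theorem mulVec_mono_of_nonneg {M : Matrix ι ι R} (hM : ∀ i j, 0 ≤ M i j) {x y : ι → R}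
    (hxy : x ≤ y) : M *ᵥ x ≤ M *ᵥ y :=
  fun i => sum_le_sum fun j _ => mul_le_mul_of_nonneg_left (hxy j) (hM i j)

theorem nonpos_of_le_mulVec [DecidableEq ι] [TopologicalSpace R] [OrderClosedTopology R]
    [IsTopologicalSemiring R] {M : Matrix ι ι R} (hM : ∀ i j, 0 ≤ M i j)
    (hlim : Tendsto (M ^ ·) atTop (𝓝 0)) {x : ι → R} (hx : x ≤ M *ᵥ x) : x ≤ 0 := by
  have hpow (m : ℕ) : x ≤ M ^ m *ᵥ x := by
    induction m with
    | zero => simp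
    | succ m ih =>
      calc x ≤ M *ᵥ x := hx
        _ ≤ M *ᵥ (M ^ m *ᵥ x) := mulVec_mono_of_nonneg hM ih
        _ = M ^ (m + 1) *ᵥ x := by rw [mulVec_mulVec, pow_succ']
  have hlimx : Tendsto (fun m : ℕ => M ^ m *ᵥ x) atTop (𝓝 0) := by
    simpa [Function.comp_def] using
      ((continuous_id.matrix_mulVec continuous_const).tendsto 0).comp hlim
  exact ge_of_tendsto' hlimx hpow

end Nonneg

end Matrix

theorem sum_sum_mul_mul_le_sum_colSum_mul {ι R : Type*} [Fintype ι] [Semiring R] [PartialOrder R]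
    [IsOrderedRing R] {B : Matrix ι ι R} (hB : ∀ j k, 0 ≤ B j k) {x : ι → R}
    (hx : ∀ j, 0 ≤ x j ∧ x j ≤ 1) :
    ∑ j, ∑ k, x j * B j k * x k ≤ ∑ j, (∑ k, B k j) * x j :=
  calc ∑ j, ∑ k, x j * B j k * x k ≤ ∑ j, ∑ k, B j k * x k :=
        sum_le_sum fun j _ => sum_le_sum fun k _ => by
          rw [mul_assoc]
          exact mul_le_of_le_one_left (mul_nonneg (hB j k) (hx k).1) (hx j).2
    _ = ∑ j, (∑ k, B k j) * x j := by
        rw [sum_comm]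
        simp only [sum_mul]

/-- If `ρ(β₁Γ⁻¹A + β₂Γ⁻¹(𝟙ᵀB₁,…,𝟙ᵀBₙ)ᵀ) < 1`, then the origin is the unique fixed point
in `[0,1]^n` of the map `H(x) = H₊(β₁Γ⁻¹Ax + β₂Γ⁻¹(xᵀB₁x,…,xᵀBₙx)ᵀ)`, i.e. the unique
equilibrium of the simplicial SIS model in `[0,1]^n`. -/
theorem disease_free_unique_fixed_point {n : ℕ} (γ : Fin n → ℝ) (hγ : ∀ i, 0 < γ i)
    (β₁ β₂ : ℝ) (hβ₁ : 0 < β₁) (hβ₂ : 0 < β₂)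
    (A : Matrix (Fin n) (Fin n) ℝ) (hA : ∀ i j, 0 ≤ A i j)
    (B : Fin n → Matrix (Fin n) (Fin n) ℝ) (hB : ∀ i j k, 0 ≤ B i j k)
    (hρ : spectralRadius ℂ
        ((Matrix.of fun i j : Fin n =>
          β₁ / γ i * A i j + β₂ / γ i * ∑ k, B i k j).map Complex.ofReal) < 1) :
    ∀ x : Fin n → ℝ, (∀ i, 0 ≤ x i ∧ x i ≤ 1) →
      (∀ i, (fun z : ℝ => z / (1 + z))
          ((β₁ / γ i) * (∑ j, A i j * x j)
            + (β₂ / γ i) * (∑ j, ∑ k, x j * B i j k * x k)) = x i) →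
      x = 0 := by
  intro x hx hfix
  set M : Matrix (Fin n) (Fin n) ℝ :=
    Matrix.of fun i j => β₁ / γ i * A i j + β₂ / γ i * ∑ k, B i k j
  have hc₁ (i : Fin n) : 0 ≤ β₁ / γ i := (div_pos hβ₁ (hγ i)).le
  have hc₂ (i : Fin n) : 0 ≤ β₂ / γ i := (div_pos hβ₂ (hγ i)).le
  have hM (i j : Fin n) : 0 ≤ M i j :=
    add_nonneg (mul_nonneg (hc₁ i) (hA i j)) (mul_nonneg (hc₂ i) (sum_nonneg fun k _ => hB i k j))
  have hsub : x ≤ M *ᵥ x := by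
    intro i
    set z := (β₁ / γ i) * (∑ j, A i j * x j) + (β₂ / γ i) * (∑ j, ∑ k, x j * B i j k * x k)
    have hz : 0 ≤ z := add_nonneg
      (mul_nonneg (hc₁ i) (sum_nonneg fun j _ => mul_nonneg (hA i j) (hx j).1))
      (mul_nonneg (hc₂ i) (sum_nonneg fun j _ => sum_nonneg fun k _ =>
        mul_nonneg (mul_nonneg (hx j).1 (hB i j k)) (hx k).1))
    calc x i = z / (1 + z) := (hfix i).symm
      _ ≤ z := div_le_self hz (le_add_of_nonneg_right hz)
      _ ≤ β₁ / γ i * ∑ j, A i j * x j + β₂ / γ i * ∑ j, (∑ k, B i k j) * x j :=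
        add_le_add_right (mul_le_mul_of_nonneg_left
          (sum_sum_mul_mul_le_sum_colSum_mul (hB i) hx) (hc₂ i)) _
      _ = (M *ᵥ x) i := by
        simp only [M, mulVec, dotProduct, of_apply, add_mul, sum_add_distrib, mul_sum, sum_mul,
          mul_assoc]
  exact le_antisymm
    (nonpos_of_le_mulVec hM (tendsto_pow_nhds_zero_of_spectralRadius_map_ofReal_lt_one hρ) hsub)
    fun i => (hx i).1
end

section
/- Endemic domain fixed point existence: If β₁ρ(Γ⁻¹A) > 1 with A nonnegative irreducible, let (ρ, v) be the Perron eigenpair of β₁Γ⁻¹A with v ≫ 0, and let c = αv for α > 0 small enough that cᵢ ≤ 1 - 1/ρ for all i. Then the map H(x) = H₊(β₁Γ⁻¹Ax + β₂Γ⁻¹(xᵀB₁x,…,xᵀBₙx)ᵀ) maps Y = {y : c ≤ y ≤ 𝟙} into itself and therefore has a fixed point x* ∈ Y with x* ≫ 0; i.e., the simplicial SIS model has an endemic equilibrium. -/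
open Finset

/-- Endemic domain: if `(ρ, v)` is the Perron eigenpair of `β₁Γ⁻¹A` with `v ≫ 0` and
`ρ > 1`, and `c = αv` with `α > 0` small enough that `cᵢ ≤ 1 - 1/ρ` for all `i`, then
the map `H(x) = H₊(β₁Γ⁻¹Ax + β₂Γ⁻¹(xᵀB₁x,…,xᵀBₙx)ᵀ)` has a fixed point `x*` with
`c ≤ x* ≤ 𝟙`, and in particular `x* ≫ 0`: an endemic equilibrium exists. -/
theorem endemic_fixed_point {n : ℕ} (γ : Fin n → ℝ) (hγ : ∀ i, 0 < γ i)
    (β₁ β₂ : ℝ) (hβ₁ : 0 < β₁) (hβ₂ : 0 < β₂)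
    (A : Matrix (Fin n) (Fin n) ℝ) (hA : ∀ i j, 0 ≤ A i j) (hirr : MatrixIrreducible A)
    (B : Fin n → Matrix (Fin n) (Fin n) ℝ) (hB : ∀ i j k, 0 ≤ B i j k)
    (ρ : ℝ) (v : Fin n → ℝ) (hv : ∀ i, 0 < v i)
    (heig : ∀ i, (β₁ / γ i) * (∑ j, A i j * v j) = ρ * v i) (hρ : 1 < ρ)
    (α : ℝ) (hα : 0 < α) (hsmall : ∀ i, α * v i ≤ 1 - 1 / ρ) :
    ∃ x : Fin n → ℝ, (∀ i, α * v i ≤ x i ∧ x i ≤ 1) ∧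
      (∀ i, (fun z : ℝ => z / (1 + z))
          ((β₁ / γ i) * (∑ j, A i j * x j)
            + (β₂ / γ i) * (∑ j, ∑ k, x j * B i j k * x k)) = x i) ∧
      (∀ i, 0 < x i) := by
  have hρ0 : (0:ℝ) < ρ := lt_trans one_pos hρ
  set c : Fin n → ℝ := fun i => α * v i with hcdef
  have hc_pos : ∀ i, 0 < c i := fun i => mul_pos hα (hv i)
  have hc_le1 : ∀ i, c i ≤ 1 := by
    intro i
    refine le_trans (hsmall i) ?_
    have : 0 ≤ 1 / ρ := by positivity
    linarith
  set F : (Fin n → ℝ) → Fin n → ℝ := fun x i =>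
    (β₁ / γ i) * (∑ j, A i j * x j) + (β₂ / γ i) * (∑ j, ∑ k, x j * B i j k * x k)
    with hFdef
  set g : (Fin n → ℝ) → Fin n → ℝ := fun x i => F x i / (1 + F x i) with hgdef
  have hF_nonneg : ∀ x : Fin n → ℝ, (∀ i, 0 ≤ x i) → ∀ i, 0 ≤ F x i := by
    intro x hx i
    have h1 : 0 ≤ ∑ j, A i j * x j :=
      Finset.sum_nonneg fun j _ => mul_nonneg (hA i j) (hx j)
    have h2 : 0 ≤ ∑ j, ∑ k, x j * B i j k * x k :=
      Finset.sum_nonneg fun j _ => Finset.sum_nonneg fun k _ =>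
        mul_nonneg (mul_nonneg (hx j) (hB i j k)) (hx k)
    have hb1 : 0 ≤ β₁ / γ i := le_of_lt (div_pos hβ₁ (hγ i))
    have hb2 : 0 ≤ β₂ / γ i := le_of_lt (div_pos hβ₂ (hγ i))
    exact add_nonneg (mul_nonneg hb1 h1) (mul_nonneg hb2 h2)
  have hF_mono : ∀ x y : Fin n → ℝ, (∀ i, 0 ≤ x i) → (∀ i, x i ≤ y i) →
      ∀ i, F x i ≤ F y i := by
    intro x y hx hxy i
    have h1 : ∑ j, A i j * x j ≤ ∑ j, A i j * y j :=
      Finset.sum_le_sum fun j _ => mul_le_mul_of_nonneg_left (hxy j) (hA i j)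
    have h2 : (∑ j, ∑ k, x j * B i j k * x k) ≤ ∑ j, ∑ k, y j * B i j k * y k := by
      refine Finset.sum_le_sum fun j _ => Finset.sum_le_sum fun k _ => ?_
      have hyj : 0 ≤ y j := le_trans (hx j) (hxy j)
      have := mul_le_mul (mul_le_mul (hxy j) le_rfl (hB i j k) hyj) (hxy k) (hx k)
        (mul_nonneg hyj (hB i j k))
      exact this
    have hb1 : 0 ≤ β₁ / γ i := le_of_lt (div_pos hβ₁ (hγ i))
    have hb2 : 0 ≤ β₂ / γ i := le_of_lt (div_pos hβ₂ (hγ i))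
    exact add_le_add (mul_le_mul_of_nonneg_left h1 hb1) (mul_le_mul_of_nonneg_left h2 hb2)
  have hmono_h : ∀ z w : ℝ, 0 ≤ z → z ≤ w → z / (1 + z) ≤ w / (1 + w) := by
    intro z w hz hzw
    have h1z : 0 < 1 + z := by linarith
    have h1w : 0 < 1 + w := by linarith
    rw [div_le_div_iff₀ h1z h1w]
    nlinarith
  have hg_le1 : ∀ x : Fin n → ℝ, (∀ i, 0 ≤ x i) → ∀ i, g x i ≤ 1 := by
    intro x hx i
    have h0 : 0 ≤ F x i := hF_nonneg x hx i
    have h1 : 0 < 1 + F x i := by linarith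
    rw [hgdef]
    simp only
    rw [div_le_one h1]
    linarith
  -- lower bound: g x ≥ c on [c,1]
  have hkey : ∀ i, c i ≤ (ρ * c i) / (1 + ρ * c i) := by
    intro i
    have hz : 0 < c i := hc_pos i
    have hzb : c i ≤ 1 - 1 / ρ := hsmall i
    have h1 : 0 < 1 + ρ * c i := by nlinarith
    rw [le_div_iff₀ h1]
    have : ρ * c i ≤ ρ - 1 := by
      have := mul_le_mul_of_nonneg_left hzb (le_of_lt hρ0)
      calc ρ * c i ≤ ρ * (1 - 1 / ρ) := this
        _ = ρ - 1 := by field_simp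
    nlinarith
  have hg_lb : ∀ x : Fin n → ℝ, (∀ i, c i ≤ x i) → ∀ i, c i ≤ g x i := by
    intro x hx i
    have hFc : ρ * c i ≤ F c i := by
      have h2 : 0 ≤ (β₂ / γ i) * (∑ j, ∑ k, c j * B i j k * c k) := by
        refine mul_nonneg (le_of_lt (div_pos hβ₂ (hγ i))) ?_
        exact Finset.sum_nonneg fun j _ => Finset.sum_nonneg fun k _ =>
          mul_nonneg (mul_nonneg (le_of_lt (hc_pos j)) (hB i j k)) (le_of_lt (hc_pos k))
      have h1 : (β₁ / γ i) * (∑ j, A i j * c j) = ρ * c i := by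
        have : (∑ j, A i j * c j) = α * ∑ j, A i j * v j := by
          rw [Finset.mul_sum]; exact Finset.sum_congr rfl fun j _ => by ring
        rw [this, hcdef]
        simp only
        rw [show (β₁ / γ i) * (α * ∑ j, A i j * v j)
            = α * ((β₁ / γ i) * ∑ j, A i j * v j) by ring, heig i]
        ring
      rw [hFdef]; simp only
      rw [h1] at *
      linarith [h1]
    have hFx : F c i ≤ F x i :=
      hF_mono c x (fun j => le_of_lt (hc_pos j)) hx i
    have hρc : 0 ≤ ρ * c i := le_of_lt (mul_pos hρ0 (hc_pos i))
    calc c i ≤ (ρ * c i) / (1 + ρ * c i) := hkey i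
      _ ≤ F x i / (1 + F x i) := hmono_h _ _ hρc (le_trans hFc hFx)
      _ = g x i := rfl
  -- Knaster–Tarski on the complete lattice Icc c 1
  haveI : Fact (c ≤ (1 : Fin n → ℝ)) := ⟨fun i => hc_le1 i⟩
  have hmem : ∀ x : Fin n → ℝ, x ∈ Set.Icc c (1 : Fin n → ℝ) →
      g x ∈ Set.Icc c (1 : Fin n → ℝ) := by
    intro x hx
    have hxl : ∀ i, c i ≤ x i := fun i => hx.1 i
    have hx0 : ∀ i, 0 ≤ x i := fun i => le_trans (le_of_lt (hc_pos i)) (hxl i)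
    exact ⟨fun i => hg_lb x hxl i, fun i => hg_le1 x hx0 i⟩
  set f : Set.Icc c (1 : Fin n → ℝ) →o Set.Icc c (1 : Fin n → ℝ) :=
    ⟨fun x => ⟨g x, hmem x x.2⟩, by
      rintro ⟨x, hx⟩ ⟨y, hy⟩ hxy
      intro i
      have hx0 : ∀ j, 0 ≤ x j := fun j => le_trans (le_of_lt (hc_pos j)) (hx.1 j)
      exact hmono_h _ _ (hF_nonneg x hx0 i) (hF_mono x y hx0 hxy i)⟩ with hfdef
  obtain ⟨x₀, hx₀⟩ : ∃ x₀, f x₀ = x₀ := ⟨OrderHom.lfp f, OrderHom.map_lfp f⟩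
  refine ⟨(x₀ : Fin n → ℝ), fun i => ⟨x₀.2.1 i, x₀.2.2 i⟩, ?_, ?_⟩
  · intro i
    have : g (x₀ : Fin n → ℝ) = (x₀ : Fin n → ℝ) := congrArg Subtype.val hx₀
    exact congrFun this i
  · intro i
    exact lt_of_lt_of_le (hc_pos i) (x₀.2.1 i)
end
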